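/- arXiv:1302.2007 — 5 statements merged into one kernel-verified Lean document; each statement's English description precedes it below -/
import Mathlib

section
/- Let u be a hermitian functional in the class Δ with minimal self-reciprocal annihilating polynomial Q (u·Q = 0, Q = Q*, deg Q = q). Then its Carathéodory formal series F satisfies F·Q = P for a polynomial P with deg P ≤ q and P^{*_q} = −P, where P^{*_q}(z) = z^q conj(P(1/conj z)). Conversely, if F·Q = P with Q = Q*, deg Q = q and P^{*_q} = −P, then u·Q = 0. -/
/-!
For hermitian `u` one has `F + F_* = 2 L[u]`, so for self-reciprocal `Q` of degree `q` the
coefficients of `F·Q` satisfy `(F·Q)_n + conj (F·Q)_{q-n} = 2 u[Q z^{-n}]`. Hence `u·Q = 0` exactly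
when `F·Q` is anti-reciprocal about `q/2`. As `F` and `Q` have no negative powers, neither has
`F·Q`, and anti-reciprocity then kills its coefficients beyond `q`: `F·Q` is a polynomial `P` of
degree at most `q` with `P^{*_q} = -P`. Conversely, such a `P` makes the left-hand side vanish.
-/

open LaurentPolynomial Complex Polynomial

noncomputable section

abbrev LP := LaurentPolynomial ℂ
abbrev Func := LP →ₗ[ℂ] ℂ

/-- The coefficients of a Laurent polynomial, as a finitely supported function on `ℤ`. -/
def coeF (L : LP) : ℤ →₀ ℂ := L.coeff

/-- The modified functional `u·L`, defined by `(u·L)[f] = u[L·f]`. -/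
def smulF (u : Func) (L : LP) : Func := u ∘ₗ LinearMap.mulLeft ℂ L

/-- The moments `μ_n = u[zⁿ]`. -/
def moment (u : Func) (n : ℤ) : ℂ := u (T n)

/-- A functional is hermitian if `μ_{-n} = conj μ_n`. -/
def IsHermitian (u : Func) : Prop := ∀ n : ℤ, moment u (-n) = (starRingEnd ℂ) (moment u n)

/-- The Carathéodory formal series `F(z) = μ₀ + 2 Σ_{n≥1} μ_{-n} zⁿ`, as coefficients. -/
def CS (u : Func) : ℤ → ℂ := fun n => if n = 0 then moment u 0 else if 0 < n then 2 * moment u (-n) else 0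

/-- The Laurent formal series `L[u](z) = Σ_{n∈ℤ} μ_{-n} zⁿ`, as coefficients. -/
def LS (u : Func) : ℤ → ℂ := fun n => moment u (-n)

/-- `H_*(z) = conj (H (1/conj z))`, coefficient-wise. -/
def starS (H : ℤ → ℂ) : ℤ → ℂ := fun n => (starRingEnd ℂ) (H (-n))

/-- Product of a formal doubly-infinite series with a Laurent polynomial. -/
def mulS (H : ℤ → ℂ) (L : LP) : ℤ → ℂ := fun n => (coeF L).sum fun k c => c * H (n - k)

/-- The `*` operation on Laurent polynomials: `L_*(z) = conj (L (1/conj z))`. -/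
def starLP (L : LP) : LP :=
  AddMonoidAlgebra.ofCoeff (Finsupp.equivMapDomain (Equiv.neg ℤ)
    (Finsupp.mapRange (starRingEnd ℂ) (map_zero _) (coeF L)) : ℤ →₀ ℂ)

/-- A Laurent polynomial as a formal series. -/
def polyS (N : LP) : ℤ → ℂ := fun n => coeF N n

/-- The Lebesgue functional `leb[zⁿ] = δ_{n,0}`. -/
def lebF : Func := (Finsupp.lapply (0 : ℤ) : (ℤ →₀ ℂ) →ₗ[ℂ] ℂ) ∘ₗ
  (AddMonoidAlgebra.coeffLinearEquiv ℂ).toLinearMap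

/-- The Dirac delta at `z = 1`: evaluation at `1`. -/
def delta1 : Func := (Finsupp.lsum ℂ (fun _ : ℤ => (LinearMap.id : ℂ →ₗ[ℂ] ℂ)) : (ℤ →₀ ℂ) →ₗ[ℂ] ℂ) ∘ₗ
  (AddMonoidAlgebra.coeffLinearEquiv ℂ).toLinearMap

/-- `P* (z) = z^q conj(P(1/conj z))` with `q` given: conjugate coefficients and reflect at `q`. -/
def starDeg (q : ℕ) (P : Polynomial ℂ) : Polynomial ℂ := Polynomial.reflect q (P.map (starRingEnd ℂ))

/-- The class `Δ` of hermitian functionals annihilated by a nonzero Laurent polynomial. -/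
def InDelta (u : Func) : Prop := IsHermitian u ∧ ∃ N : LP, N ≠ 0 ∧ smulF u N = 0

lemma polyS_toLaurent_natCast (P : ℂ[X]) (m : ℕ) : polyS (toLaurent P) m = P.coeff m := by
  simp only [polyS, coeF, coeff_toLaurent]
  exact Finsupp.mapDomain_apply Nat.castEmbedding.injective P.toFinsupp.coeff m

lemma polyS_toLaurent_of_neg (P : ℂ[X]) {n : ℤ} (hn : n < 0) : polyS (toLaurent P) n = 0 := by
  simp only [polyS, coeF, coeff_toLaurent]
  refine Finsupp.mapDomain_of_notMem_range _ _ ?_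
  rintro ⟨m, rfl⟩
  exact (Int.natCast_nonneg m).not_gt hn

lemma polyS_toLaurent_of_natDegree_lt (P : ℂ[X]) {n : ℤ} (hn : (P.natDegree : ℤ) < n) :
    polyS (toLaurent P) n = 0 := by
  lift n to ℕ using by omega
  rw [polyS_toLaurent_natCast, coeff_eq_zero_of_natDegree_lt (by omega)]

lemma coeff_starDeg_of_le (P : ℂ[X]) {q k : ℕ} (hk : k ≤ q) :
    (starDeg q P).coeff k = starRingEnd ℂ (P.coeff (q - k)) := by
  rw [starDeg, coeff_reflect, revAt_le hk, coeff_map]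

lemma coeff_starDeg_of_lt (P : ℂ[X]) {q k : ℕ} (hk : q < k) :
    (starDeg q P).coeff k = starRingEnd ℂ (P.coeff k) := by
  rw [starDeg, coeff_reflect, revAt_eq_self_of_lt hk, coeff_map]

lemma starDeg_eq_neg_iff {P : ℂ[X]} {q : ℕ} (hP : P.natDegree ≤ q) :
    starDeg q P = -P ↔
      ∀ n : ℤ, polyS (toLaurent P) n + starRingEnd ℂ (polyS (toLaurent P) (q - n)) = 0 := by
  constructor
  · intro h n
    rcases lt_or_ge n 0 with hn | hn
    · rw [polyS_toLaurent_of_neg P hn, polyS_toLaurent_of_natDegree_lt P (by omega), map_zero,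
        add_zero]
    rcases le_or_gt n q with hnq | hnq
    · lift n to ℕ using hn
      have hc := congrArg (coeff · n) h
      simp only [coeff_starDeg_of_le P (show n ≤ q by omega), coeff_neg] at hc
      rw [← Nat.cast_sub (by omega), polyS_toLaurent_natCast, polyS_toLaurent_natCast, hc,
        add_neg_cancel]
    · rw [polyS_toLaurent_of_natDegree_lt P (by omega), polyS_toLaurent_of_neg P (by omega),
        map_zero, add_zero]
  · intro h
    ext k
    rw [coeff_neg]
    rcases le_or_gt k q with hk | hk
    · have hk' := h k
      rw [← Nat.cast_sub hk, polyS_toLaurent_natCast, polyS_toLaurent_natCast] at hk'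
      rw [coeff_starDeg_of_le P hk]
      linear_combination hk'
    · rw [coeff_starDeg_of_lt P hk, coeff_eq_zero_of_natDegree_lt (by omega), map_zero, neg_zero]

lemma exists_polyS_eq_of_add_conj_reflect_eq_zero {s : ℤ → ℂ} {q : ℕ}
    (hneg : ∀ n < 0, s n = 0) (hs : ∀ n : ℤ, s n + starRingEnd ℂ (s (q - n)) = 0) :
    ∃ P : ℂ[X], P.natDegree ≤ q ∧ s = polyS (toLaurent P) ∧ starDeg q P = -P := by
  have hhigh : ∀ n : ℤ, q < n → s n = 0 := fun n hn => by
    simpa [hneg (q - n) (by omega)] using hs (q - n)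
  set P : ℂ[X] := ∑ k ∈ Finset.range (q + 1), monomial k (s k)
  have hP : ∀ m : ℕ, P.coeff m = s m := fun m => by
    simp only [P, finsetSum_coeff, coeff_monomial, Finset.sum_ite_eq', Finset.mem_range]
    split_ifs with hm
    · rfl
    · exact (hhigh m (by omega)).symm
  have hdeg : P.natDegree ≤ q :=
    natDegree_le_iff_coeff_eq_zero.2 fun m hm => (hP m).trans (hhigh m (by exact_mod_cast hm))
  have hsP : s = polyS (toLaurent P) := by
    funext n
    rcases lt_or_ge n 0 with hn | hn
    · rw [hneg n hn, polyS_toLaurent_of_neg P hn]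
    · lift n to ℕ using hn
      rw [polyS_toLaurent_natCast, hP]
  exact ⟨P, hdeg, hsP, (starDeg_eq_neg_iff hdeg).2 (hsP ▸ hs)⟩

lemma mulS_toLaurent (H : ℤ → ℂ) (Q : ℂ[X]) {q : ℕ} (hq : Q.natDegree ≤ q) (n : ℤ) :
    mulS H (toLaurent Q) n = ∑ k ∈ Finset.range (q + 1), Q.coeff k * H (n - k) := by
  rw [mulS, coeF, coeff_toLaurent, Finsupp.sum_mapDomain_index_inj Nat.castEmbedding.injective]
  exact sum_over_range' Q (f := fun k c => c * H (n - k)) (fun _ => zero_mul _) _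
    (Nat.lt_succ_of_le hq)

lemma mulS_CS_toLaurent_of_neg (u : Func) (Q : ℂ[X]) {n : ℤ} (hn : n < 0) :
    mulS (CS u) (toLaurent Q) n = 0 := by
  rw [mulS_toLaurent _ Q le_rfl]
  refine Finset.sum_eq_zero fun k _ => ?_
  have hk : n - k < 0 := by omega
  simp only [CS, if_neg hk.ne, if_neg hk.not_gt, mul_zero]

lemma apply_toLaurent_mul_T (u : Func) (Q : ℂ[X]) {q : ℕ} (hq : Q.natDegree ≤ q) (m : ℤ) :
    u (toLaurent Q * T m) = ∑ k ∈ Finset.range (q + 1), Q.coeff k * moment u (k + m) := by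
  conv_lhs => rw [as_sum_range' Q (q + 1) (Nat.lt_succ_of_le hq)]
  rw [map_sum, Finset.sum_mul, map_sum]
  refine Finset.sum_congr rfl fun k _ => ?_
  rw [toLaurent_C_mul_T, mul_assoc, ← T_add, ← LaurentPolynomial.smul_eq_C_mul, map_smul,
    smul_eq_mul, moment]

lemma smulF_eq_zero_iff (u : Func) (L : LP) : smulF u L = 0 ↔ ∀ m : ℤ, u (L * T m) = 0 := by
  refine ⟨fun h m => LinearMap.congr_fun h (T m), fun h => LinearMap.ext fun f => ?_⟩
  induction f using LaurentPolynomial.induction_on' with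
  | add p q hp hq => simp_all [smulF, mul_add]
  | C_mul_T n a =>
    simp [smulF, ← LaurentPolynomial.smul_eq_C_mul, h n]

/-- `F + F_* = 2 L[u]` coefficientwise. -/
lemma CS_add_conj_CS_neg (u : Func) (hu : IsHermitian u) (n : ℤ) :
    CS u n + starRingEnd ℂ (CS u (-n)) = 2 * moment u (-n) := by
  rcases lt_trichotomy n 0 with hn | rfl | hn
  · simp [CS, hn.ne, hn.not_gt, hn, hu n, map_ofNat]
  · simp [CS, ← hu 0, two_mul]
  · simp [CS, hn.ne', hn, hn.le]

/-- `(F + F_*)·Q = 2 L[u]·Q` read at `zⁿ`, with `Q = Q*` turning `(F_*·Q)_n` into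
`conj (F·Q)_{q-n}`. -/
lemma mulS_CS_add_conj_reflect (u : Func) (hu : IsHermitian u) {Q : ℂ[X]} {q : ℕ}
    (hq : Q.natDegree ≤ q) (hQ : starDeg q Q = Q) (n : ℤ) :
    mulS (CS u) (toLaurent Q) n + starRingEnd ℂ (mulS (CS u) (toLaurent Q) (q - n)) =
      2 * u (toLaurent Q * T (-n)) := by
  have hrefl : ∑ k ∈ Finset.range (q + 1), starRingEnd ℂ (Q.coeff k * CS u (q - n - k)) =
      ∑ k ∈ Finset.range (q + 1), Q.coeff k * starRingEnd ℂ (CS u (-(n - k))) := by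
    rw [← Finset.sum_range_reflect]
    refine Finset.sum_congr rfl fun k hk => ?_
    have hk : k ≤ q := Nat.lt_succ_iff.1 (Finset.mem_range.1 hk)
    rw [Nat.add_sub_cancel, map_mul, ← coeff_starDeg_of_le Q hk, hQ, Nat.cast_sub hk]
    ring_nf
  rw [mulS_toLaurent _ _ hq, mulS_toLaurent _ _ hq, apply_toLaurent_mul_T u Q hq, map_sum, hrefl,
    Finset.mul_sum, ← Finset.sum_add_distrib]
  refine Finset.sum_congr rfl fun k _ => ?_
  rw [← mul_add, CS_add_conj_CS_neg u hu]
  ring_nf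

/-- for `u ∈ Δ` with minimal self-reciprocal annihilating polynomial `Q`
(of degree `q`), the Carathéodory series satisfies `F·Q = P` with `deg P ≤ q` and
`P^{*_q} = -P`; conversely `F·Q = P` with these symmetries implies `u·Q = 0`. -/
theorem stmt5 (u : Func) (hu : IsHermitian u) :
    (∀ Q : Polynomial ℂ, Q ≠ 0 → smulF u (Polynomial.toLaurent Q) = 0 →
      starDeg Q.natDegree Q = Q →
      (∀ Q₁ : Polynomial ℂ, smulF u (Polynomial.toLaurent Q₁) = 0 → Q ∣ Q₁) →
      ∃ P : Polynomial ℂ, P.natDegree ≤ Q.natDegree ∧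
        mulS (CS u) (Polynomial.toLaurent Q) = polyS (Polynomial.toLaurent P) ∧
        starDeg Q.natDegree P = -P) ∧
    (∀ Q P : Polynomial ℂ, Q ≠ 0 → starDeg Q.natDegree Q = Q →
      P.natDegree ≤ Q.natDegree → starDeg Q.natDegree P = -P →
      mulS (CS u) (Polynomial.toLaurent Q) = polyS (Polynomial.toLaurent P) →
      smulF u (Polynomial.toLaurent Q) = 0) := by
  constructor
  · intro Q _ hann hQ _
    refine exists_polyS_eq_of_add_conj_reflect_eq_zero
      (fun n hn => mulS_CS_toLaurent_of_neg u Q hn) fun n => ?_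
    rw [mulS_CS_add_conj_reflect u hu le_rfl hQ, (smulF_eq_zero_iff u _).1 hann, mul_zero]
  · intro Q P _ hQ hdeg hP hFQ
    refine (smulF_eq_zero_iff u _).2 fun m => ?_
    have h := mulS_CS_add_conj_reflect u hu le_rfl hQ (-m)
    rw [hFQ, (starDeg_eq_neg_iff hdeg).1 hP, neg_neg] at h
    exact (mul_eq_zero.1 h.symm).resolve_left two_ne_zero
end
end

section
/- Let u, v be hermitian functionals not in Δ, related by a rational modification. Then the set I(u,v) = {(L,M) ∈ Λ₀×Λ₀ : u·L = v·M} has a minimal element (L₀,M₀), unique up to multiplication by units of the Laurent polynomial ring, and I(u,v) = {(N·L₀, N·M₀) : N ∈ Λ, N ≠ 0}. -/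
/-! For `v ∉ Δ` the map `M ↦ v·M` is injective, so a pair `(L, M) ∈ I(u,v)` is determined by `L`.
Hence `I(u,v) ∪ {0}`, a `Λ`-submodule of `Λ × Λ`, is isomorphic to an ideal of the principal ideal
domain `Λ`, and a generator of it is the minimal element. Its uniqueness up to units is
cancellation in the domain `Λ`. -/

open LaurentPolynomial Complex Polynomial

noncomputable section

theorem IsLocalization.isPrincipalIdealRing {R S : Type*} [CommRing R] [CommRing S] [Algebra R S]
    (M : Submonoid R) [IsLocalization M S] [IsPrincipalIdealRing R] : IsPrincipalIdealRing S where
  principal J := by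
    obtain ⟨g, hg⟩ := IsPrincipalIdealRing.principal (J.under R)
    refine ⟨⟨algebraMap R S g, ?_⟩⟩
    rw [← IsLocalization.map_under M S J, hg]
    simp [Ideal.map_span]

instance LaurentPolynomial.isPrincipalIdealRing {K : Type*} [Field K] :
    IsPrincipalIdealRing K[T;T⁻¹] :=
  IsLocalization.isPrincipalIdealRing (Submonoid.powers (X : K[X]))

/-- Projecting onto the first factor, such a submodule is isomorphic to an ideal of `R`. -/
theorem Submodule.isPrincipal_of_forall_zero_prod_mem {R : Type*} [Ring R]
    [IsPrincipalIdealRing R] (I : Submodule R (R × R)) (hI : ∀ b : R, (0, b) ∈ I → b = 0) :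
    I.IsPrincipal := by
  obtain ⟨a, ha⟩ := IsPrincipalIdealRing.principal (I.map (LinearMap.fst R R R))
  obtain ⟨⟨a', b⟩, hab, rfl⟩ : a ∈ I.map (LinearMap.fst R R R) :=
    ha ▸ Submodule.mem_span_singleton_self a
  refine ⟨⟨(a', b), le_antisymm (fun ⟨x, y⟩ hxy => ?_) (span_le.2 (by simpa using hab))⟩⟩
  obtain ⟨c, rfl⟩ : ∃ c, c • a' = x :=
    mem_span_singleton.1 (ha ▸ mem_map_of_mem (f := LinearMap.fst R R R) hxy)
  have hy : y = c * b := sub_eq_zero.1 (hI _ (by simpa using I.sub_mem hxy (I.smul_mem c hab)))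
  exact mem_span_singleton.2 ⟨c, by simp [hy]⟩

lemma smulF_mul (u : Func) (N L : LP) : smulF u (N * L) = smulF (smulF u L) N := by
  ext f; simp [smulF, mul_left_comm]

lemma smulF_add (u : Func) (L L' : LP) : smulF u (L + L') = smulF u L + smulF u L' := by
  ext f; simp [smulF, add_mul]

lemma smulF_zero (u : Func) : smulF u 0 = 0 := by
  ext f; simp [smulF]

lemma eq_zero_of_smulF_eq_zero {v : Func} (hv : IsHermitian v) (hvd : ¬ InDelta v) {M : LP}
    (h : smulF v M = 0) : M = 0 :=
  by_contra fun hM => hvd ⟨hv, M, hM, h⟩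

/-- The set `I(u,v)`, together with the pairs having a zero entry. -/
def modificationPairs (u v : Func) : Submodule LP (LP × LP) where
  carrier := {p | smulF u p.1 = smulF v p.2}
  add_mem' {p q} hp hq := by
    change smulF u (p.1 + q.1) = smulF v (p.2 + q.2)
    rw [smulF_add, smulF_add, hp, hq]
  zero_mem' := by
    change smulF u 0 = smulF v 0
    rw [smulF_zero, smulF_zero]
  smul_mem' c p hp := by
    change smulF u (c * p.1) = smulF v (c * p.2)
    rw [smulF_mul, smulF_mul, hp]

theorem exists_generator_modificationPairs (u : Func) {v : Func} (hv : IsHermitian v)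
    (hvd : ¬ InDelta v) :
    ∃ L₀ M₀ : LP, ∀ L M : LP, smulF u L = smulF v M ↔ ∃ N, L = N * L₀ ∧ M = N * M₀ := by
  obtain ⟨⟨L₀, M₀⟩, hI⟩ := (modificationPairs u v).isPrincipal_of_forall_zero_prod_mem
    fun M hM => eq_zero_of_smulF_eq_zero hv hvd ((smulF_zero u).symm.trans hM).symm
  refine ⟨L₀, M₀, fun L M => ?_⟩
  have hLM := SetLike.ext_iff.1 hI (L, M)
  rw [Submodule.mem_span_singleton] at hLM
  simpa [modificationPairs, Prod.ext_iff, eq_comm] using hLM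

theorem stmt8_general (u v : Func) (hv : IsHermitian v)
    (hvd : ¬ InDelta v)
    (hRM : ∃ L M : LP, L ≠ 0 ∧ M ≠ 0 ∧ smulF u L = smulF v M) :
    ∃ L₀ M₀ : LP, L₀ ≠ 0 ∧ M₀ ≠ 0 ∧ smulF u L₀ = smulF v M₀ ∧
      (∀ L M : LP, L ≠ 0 → M ≠ 0 → smulF u L = smulF v M →
        ∃ N : LP, N ≠ 0 ∧ L = N * L₀ ∧ M = N * M₀) ∧
      (∀ N : LP, N ≠ 0 → smulF u (N * L₀) = smulF v (N * M₀)) ∧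
      (∀ L₁ M₁ : LP, L₁ ≠ 0 → M₁ ≠ 0 → smulF u L₁ = smulF v M₁ →
        (∀ L M : LP, L ≠ 0 → M ≠ 0 → smulF u L = smulF v M →
          ∃ N : LP, L = N * L₁ ∧ M = N * M₁) →
        ∃ N : LP, IsUnit N ∧ L₁ = N * L₀ ∧ M₁ = N * M₀) := by
  obtain ⟨L₀, M₀, hI⟩ := exists_generator_modificationPairs u hv hvd
  obtain ⟨L, M, hL, hM, hLM⟩ := hRM
  obtain ⟨N, rfl, rfl⟩ := (hI L M).1 hLM
  have hL₀ : L₀ ≠ 0 := right_ne_zero_of_mul hL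
  have hLM₀ : smulF u L₀ = smulF v M₀ := (hI L₀ M₀).2 ⟨1, (one_mul L₀).symm, (one_mul M₀).symm⟩
  refine ⟨L₀, M₀, hL₀, right_ne_zero_of_mul hM, hLM₀, ?_, fun N _ => (hI _ _).2 ⟨N, rfl, rfl⟩, ?_⟩
  · intro L M hL _ hLM
    obtain ⟨N, rfl, rfl⟩ := (hI L M).1 hLM
    exact ⟨N, left_ne_zero_of_mul hL, rfl, rfl⟩
  · intro L₁ M₁ _ _ hLM₁ hmin
    obtain ⟨N, rfl, rfl⟩ := (hI L₁ M₁).1 hLM₁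
    obtain ⟨N', hN'N, -⟩ := hmin L₀ M₀ hL₀ (right_ne_zero_of_mul hM) hLM₀
    have : N' * N = 1 := (mul_eq_right₀ hL₀).1 (by rw [mul_assoc, ← hN'N])
    exact ⟨N, IsUnit.of_mul_eq_one_right N' this, rfl, rfl⟩

/-- for hermitian `u, v ∉ Δ` related by a rational modification, the set
`I(u,v) = {(L,M) : u·L = v·M}` has a minimal element `(L₀,M₀)`, unique up to units of the
Laurent polynomial ring, and `I(u,v) = Λ₀·(L₀,M₀)`. -/
theorem stmt8 (u v : Func) (hu : IsHermitian u) (hv : IsHermitian v)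
    (hud : ¬ InDelta u) (hvd : ¬ InDelta v)
    (hRM : ∃ L M : LP, L ≠ 0 ∧ M ≠ 0 ∧ smulF u L = smulF v M) :
    ∃ L₀ M₀ : LP, L₀ ≠ 0 ∧ M₀ ≠ 0 ∧ smulF u L₀ = smulF v M₀ ∧
      (∀ L M : LP, L ≠ 0 → M ≠ 0 → smulF u L = smulF v M →
        ∃ N : LP, N ≠ 0 ∧ L = N * L₀ ∧ M = N * M₀) ∧
      (∀ N : LP, N ≠ 0 → smulF u (N * L₀) = smulF v (N * M₀)) ∧
      (∀ L₁ M₁ : LP, L₁ ≠ 0 → M₁ ≠ 0 → smulF u L₁ = smulF v M₁ →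
        (∀ L M : LP, L ≠ 0 → M ≠ 0 → smulF u L = smulF v M →
          ∃ N : LP, L = N * L₁ ∧ M = N * M₁) →
        ∃ N : LP, IsUnit N ∧ L₁ = N * L₀ ∧ M₁ = N * M₀) :=
  stmt8_general u v hv hvd hRM
end
end

section
/- Let u, v be hermitian functionals not in Δ, and suppose u·L = v·M is a minimal rational modification. Then (L_*, M_*) is a unit multiple of (L, M): there exist α ∈ ℂ* and p ∈ ℤ with (z^p·L_*, z^p·M_*) = α·(L, M). -/
open LaurentPolynomial Complex Polynomial

noncomputable section

/-
Since `u` and `v` are hermitian, the relation `u·L = v·M` survives the involution `*`, so minimality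
gives `(L_*, M_*) = N·(L, M)`. Applying `*` once more yields `L = N_* N L`, hence `N_* N = 1`; the
units of `ℂ[z, z⁻¹]` are the monomials `α zᵏ`, and `p = -k` does the job.
-/

lemma starLP_coeff (L : LP) (n : ℤ) : (starLP L).coeff n = (starRingEnd ℂ) (L.coeff (-n)) := rfl

lemma starLP_zero : starLP 0 = 0 :=
  AddMonoidAlgebra.ext <| Finsupp.ext fun n => by rw [starLP_coeff]; simp

lemma starLP_add (a b : LP) : starLP (a + b) = starLP a + starLP b :=
  AddMonoidAlgebra.ext <| Finsupp.ext fun n => by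
    simp only [AddMonoidAlgebra.coeff_add, Finsupp.add_apply, starLP_coeff, map_add]

lemma starLP_single (k : ℤ) (c : ℂ) :
    starLP (AddMonoidAlgebra.single k c) = AddMonoidAlgebra.single (-k) ((starRingEnd ℂ) c) := by
  refine AddMonoidAlgebra.ext <| Finsupp.ext fun n => ?_
  rw [starLP_coeff]
  show (starRingEnd ℂ) (Finsupp.single k c (-n)) = Finsupp.single (-k) ((starRingEnd ℂ) c) n
  by_cases h : n = -k
  · subst h; simp
  · rw [Finsupp.single_eq_of_ne (by omega), Finsupp.single_eq_of_ne (by omega), map_zero]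

lemma starLP_mul (a b : LP) : starLP (a * b) = starLP a * starLP b := by
  induction a using AddMonoidAlgebra.induction_linear with
  | zero => simp [starLP_zero]
  | add f g hf hg => rw [add_mul, starLP_add, starLP_add, hf, hg, add_mul]
  | single k c =>
    induction b using AddMonoidAlgebra.induction_linear with
    | zero => simp [starLP_zero]
    | add f g hf hg => rw [mul_add, starLP_add, starLP_add, hf, hg, mul_add]
    | single l d =>
      rw [AddMonoidAlgebra.single_mul_single, starLP_single, starLP_single, starLP_single,
        AddMonoidAlgebra.single_mul_single, map_mul, neg_add]

lemma starLP_starLP (L : LP) : starLP (starLP L) = L :=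
  AddMonoidAlgebra.ext <| Finsupp.ext fun n => by
    rw [starLP_coeff, starLP_coeff, neg_neg, Complex.conj_conj]

lemma starLP_ne_zero {L : LP} (h : L ≠ 0) : starLP L ≠ 0 := fun h0 =>
  h (by rw [← starLP_starLP L, h0, starLP_zero])

lemma IsHermitian.apply_starLP {u : Func} (hu : IsHermitian u) (f : LP) :
    u (starLP f) = (starRingEnd ℂ) (u f) := by
  induction f using AddMonoidAlgebra.induction_linear with
  | zero => simp [starLP_zero]
  | add f g hf hg => rw [starLP_add, map_add, map_add, hf, hg, map_add]
  | single k c =>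
    have hsingle (k : ℤ) (c : ℂ) : u (AddMonoidAlgebra.single k c) = c * moment u k := by
      rw [← mul_one c, ← AddMonoidAlgebra.smul_single', map_smul, smul_eq_mul, mul_one, moment, T]
    rw [starLP_single, hsingle, hsingle, hu, map_mul]

lemma IsHermitian.smulF_starLP {u : Func} (hu : IsHermitian u) (L f : LP) :
    smulF u (starLP L) f = (starRingEnd ℂ) (smulF u L (starLP f)) := by
  show u (starLP L * f) = (starRingEnd ℂ) (u (L * starLP f))
  rw [← hu.apply_starLP, starLP_mul, starLP_starLP]

lemma smulF_starLP_eq_of_smulF_eq {u v : Func} (hu : IsHermitian u) (hv : IsHermitian v)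
    {L M : LP} (h : smulF u L = smulF v M) : smulF u (starLP L) = smulF v (starLP M) :=
  LinearMap.ext fun f => by rw [hu.smulF_starLP, hv.smulF_starLP, h]

namespace LaurentPolynomial

lemma T_neg_mul_C_mul_T_mul {R : Type*} [CommRing R] (r : R) (k : ℤ) (L : R[T;T⁻¹]) :
    T (-k) * (C r * T k * L) = r • L := by
  rw [show T (-k) * (C r * T k * L) = C r * (T (-k) * T k) * L by ring, ← T_add, neg_add_cancel,
    T_zero, mul_one, C_eq_algebraMap, ← Algebra.smul_def]

lemma exists_C_mul_T_of_isUnit {R : Type*} [CommRing R] [IsDomain R] {N : R[T;T⁻¹]}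
    (hN : IsUnit N) :
    ∃ (r : R) (k : ℤ), IsUnit r ∧ N = C r * T k := by
  obtain ⟨N', hN'⟩ := hN.exists_left_inv
  obtain ⟨n, p, hp⟩ := exists_T_pow N
  obtain ⟨m, q, hq⟩ := exists_T_pow N'
  -- clearing denominators, `q * p` is a power of `X`, so `p` is a unit times a power of `X`
  have hqp : q * p = X ^ (m + n) := Polynomial.toLaurent_injective <| by
    rw [map_mul, hp, hq, Polynomial.toLaurent_X_pow,
      show N' * T (m : ℤ) * (N * T (n : ℤ)) = N' * N * (T (m : ℤ) * T (n : ℤ)) by ring,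
      hN', one_mul, ← T_add]
    norm_cast
  obtain ⟨i, -, hassoc⟩ := (dvd_prime_pow Polynomial.prime_X (m + n)).mp (Dvd.intro_left q hqp)
  obtain ⟨w, hw⟩ := hassoc.symm
  obtain ⟨r, hr, hCr⟩ := Polynomial.isUnit_iff.mp w.isUnit
  refine ⟨r, i - n, hr, ?_⟩
  have hN : N = Polynomial.toLaurent p * T (-(n : ℤ)) := by
    rw [hp, mul_T_assoc, add_neg_cancel, T_zero, mul_one]
  rw [hN, ← hw, ← hCr, map_mul, Polynomial.toLaurent_X_pow, Polynomial.toLaurent_C,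
    sub_eq_add_neg, T_add]
  ring

end LaurentPolynomial

theorem stmt9_general (u v : Func) (hu : IsHermitian u) (hv : IsHermitian v)
    (L M : LP) (hL : L ≠ 0) (hM : M ≠ 0)
    (hRM : smulF u L = smulF v M)
    (hmin : ∀ L₁ M₁ : LP, L₁ ≠ 0 → M₁ ≠ 0 → smulF u L₁ = smulF v M₁ →
      ∃ N : LP, L₁ = N * L ∧ M₁ = N * M) :
    ∃ (α : ℂ) (p : ℤ), α ≠ 0 ∧ T p * starLP L = α • L ∧ T p * starLP M = α • M := by
  obtain ⟨N, hNL, hNM⟩ := hmin (starLP L) (starLP M) (starLP_ne_zero hL) (starLP_ne_zero hM)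
    (smulF_starLP_eq_of_smulF_eq hu hv hRM)
  have hinv : starLP N * N = 1 := by
    refine mul_right_cancel₀ hL ?_
    calc starLP N * N * L = starLP N * starLP L := by rw [mul_assoc, ← hNL]
      _ = L := by rw [← starLP_mul, ← hNL, starLP_starLP]
      _ = 1 * L := (one_mul L).symm
  obtain ⟨α, k, hα, hN⟩ := exists_C_mul_T_of_isUnit (IsUnit.of_mul_eq_one_right _ hinv)
  refine ⟨α, -k, hα.ne_zero, ?_, ?_⟩
  · rw [hNL, hN, T_neg_mul_C_mul_T_mul]
  · rw [hNM, hN, T_neg_mul_C_mul_T_mul]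

/-- if `u·L = v·M` is a minimal rational modification between hermitian
functionals not in `Δ`, then `(L_*, M_*)` is a unit multiple of `(L, M)`:
`(z^p L_*, z^p M_*) = α·(L, M)` for some `α ∈ ℂ*`, `p ∈ ℤ`. -/
theorem stmt9 (u v : Func) (hu : IsHermitian u) (hv : IsHermitian v)
    (hud : ¬ InDelta u) (hvd : ¬ InDelta v)
    (L M : LP) (hL : L ≠ 0) (hM : M ≠ 0)
    (hRM : smulF u L = smulF v M)
    (hmin : ∀ L₁ M₁ : LP, L₁ ≠ 0 → M₁ ≠ 0 → smulF u L₁ = smulF v M₁ →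
      ∃ N : LP, L₁ = N * L ∧ M₁ = N * M) :
    ∃ (α : ℂ) (p : ℤ), α ≠ 0 ∧ T p * starLP L = α • L ∧ T p * starLP M = α • M :=
  stmt9_general u v hu hv L M hL hM hRM hmin
end
end

section
/- With F(z) = 1 + (2i/π) Log((1+iz)/(1−iz)) on |z| < 1 and α ≥ 2, the function G(z) = z·F(z) + α satisfies Re G(z) > 0 for all |z| < 1; hence G is a Carathéodory function (holomorphic on the disk with positive real part and G(0) = α > 0). -/
open LaurentPolynomial Complex Polynomial

noncomputable section

/-!
For `‖z‖ < 1` the point `w = (1 + iz)/(1 - iz)` lies in the right half-plane, so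
`|Im (Log w)| < π/2`, and `Im z · log |w| ≤ 0` because `|1 + iz| ≤ |1 - iz|` exactly when
`Im z ≥ 0`. Writing `L = Log w`, `Re (z F(z)) = Re z - (2/π)(Re z · Im L + Im z · Re L)`,
and the two facts give `Re (z F(z)) ≥ Re z - |Re z| > -2`, hence `Re G > α - 2 ≥ 0`.
-/

def cayley (z : ℂ) : ℂ := (1 + I * z) / (1 - I * z)

def stripMap (z : ℂ) : ℂ := 1 + (2 * I / (Real.pi : ℂ)) * Complex.log (cayley z)

lemma one_sub_I_mul_ne_zero {z : ℂ} (hz : ‖z‖ < 1) : 1 - I * z ≠ 0 := by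
  intro h
  have : ‖I * z‖ = 1 := by rw [← sub_eq_zero.mp h, norm_one]
  simp only [norm_mul, norm_I, one_mul] at this
  linarith

lemma re_cayley_pos {z : ℂ} (hz : ‖z‖ < 1) : 0 < (cayley z).re := by
  have hnormSq : z.re * z.re + z.im * z.im < 1 := by
    rw [← normSq_apply, normSq_eq_norm_sq]
    nlinarith [norm_nonneg z]
  have hden : 0 < normSq (1 - I * z) := normSq_pos.mpr (one_sub_I_mul_ne_zero hz)
  rw [cayley, div_re, ← add_div]
  refine div_pos ?_ hden
  simp only [add_re, add_im, sub_re, sub_im, mul_re, mul_im, one_re, one_im, I_re, I_im]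
  nlinarith

lemma abs_im_log_cayley_le {z : ℂ} (hz : ‖z‖ < 1) :
    |(Complex.log (cayley z)).im| ≤ Real.pi / 2 := by
  rw [log_im]
  exact (abs_arg_lt_pi_div_two_iff.mpr (Or.inl (re_cayley_pos hz))).le

lemma norm_one_add_I_mul_le {z : ℂ} (hz : 0 ≤ z.im) : ‖1 + I * z‖ ≤ ‖1 - I * z‖ := by
  rw [norm_def, norm_def]
  refine Real.sqrt_le_sqrt ?_
  simp only [normSq_apply, add_re, add_im, sub_re, sub_im, mul_re, mul_im, one_re, one_im,
    I_re, I_im]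
  nlinarith

lemma im_mul_re_log_cayley_nonpos {z : ℂ} (hz : 1 - I * z ≠ 0) :
    z.im * (Complex.log (cayley z)).re ≤ 0 := by
  rw [log_re, cayley, norm_div]
  rcases le_or_gt 0 z.im with him | him
  · exact mul_nonpos_of_nonneg_of_nonpos him
      (Real.log_nonpos (by positivity) (div_le_one_of_le₀ (norm_one_add_I_mul_le him)
        (norm_nonneg _)))
  · have hle : ‖1 - I * z‖ ≤ ‖1 + I * z‖ := by
      simpa [sub_eq_add_neg] using norm_one_add_I_mul_le (z := -z) (by simpa using him.le)
    exact mul_nonpos_of_nonpos_of_nonneg him.le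
      (Real.log_nonneg ((one_le_div (norm_pos_iff.mpr hz)).mpr hle))

lemma re_mul_stripMap (z : ℂ) :
    (z * stripMap z).re = z.re - 2 / Real.pi *
      (z.re * (Complex.log (cayley z)).im + z.im * (Complex.log (cayley z)).re) := by
  have hcoef : 2 * I / (Real.pi : ℂ) = ((2 / Real.pi : ℝ) : ℂ) * I := by push_cast; ring
  rw [stripMap, hcoef]
  simp only [mul_re, mul_im, add_re, add_im, one_re, one_im, ofReal_re, ofReal_im, I_re, I_im]
  ring

lemma neg_two_lt_re_mul_stripMap {z : ℂ} (hz : ‖z‖ < 1) : -2 < (z * stripMap z).re := by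
  set L := Complex.log (cayley z)
  have hπ := Real.pi_pos
  have him : z.re * L.im ≤ |z.re| * (Real.pi / 2) := by
    calc z.re * L.im ≤ |z.re| * |L.im| := by rw [← abs_mul]; exact le_abs_self _
      _ ≤ |z.re| * (Real.pi / 2) := by gcongr; exact abs_im_log_cayley_le hz
  have hre : z.im * L.re ≤ 0 := im_mul_re_log_cayley_nonpos (one_sub_I_mul_ne_zero hz)
  have hbound : 2 / Real.pi * (z.re * L.im + z.im * L.re) ≤ |z.re| := by
    calc 2 / Real.pi * (z.re * L.im + z.im * L.re)
        ≤ 2 / Real.pi * (|z.re| * (Real.pi / 2)) := by gcongr; linarith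
      _ = |z.re| := by field_simp
  have hre_lt : |z.re| < 1 := (abs_re_le_norm z).trans_lt hz
  rw [re_mul_stripMap]
  linarith [neg_abs_le z.re]

lemma differentiableOn_stripMap : DifferentiableOn ℂ stripMap (Metric.ball 0 1) := by
  intro z hz
  have hz' : ‖z‖ < 1 := mem_ball_zero_iff.mp hz
  have hcayley : DifferentiableAt ℂ cayley z :=
    (by fun_prop : DifferentiableAt ℂ (fun z : ℂ => 1 + I * z) z).div (by fun_prop)
      (one_sub_I_mul_ne_zero hz')
  have hlog := hcayley.clog (Or.inl (re_cayley_pos hz'))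
  exact ((hlog.const_mul _).const_add _).differentiableWithinAt

/-- with `F(z) = 1 + (2i/π) Log((1+iz)/(1-iz))` on `|z| < 1` and
`α ≥ 2`, the function `G(z) = z·F(z) + α` has `Re G > 0` on the open unit disk; hence
`G` is a Carathéodory function: holomorphic on the disk, positive real part, `G(0) = α > 0`. -/
theorem stmt18 (α : ℝ) (hα : 2 ≤ α) (F G : ℂ → ℂ)
    (hF : ∀ z : ℂ, F z = 1 + (2 * Complex.I / (Real.pi : ℂ)) *
      Complex.log ((1 + Complex.I * z) / (1 - Complex.I * z)))
    (hG : ∀ z : ℂ, G z = z * F z + (α : ℂ)) :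
    (∀ z : ℂ, ‖z‖ < 1 → 0 < (G z).re) ∧
    DifferentiableOn ℂ G (Metric.ball (0 : ℂ) 1) ∧
    G 0 = (α : ℂ) ∧ 0 < α := by
  have hG' : G = fun z => z * stripMap z + α := funext fun z => by rw [hG, hF]; rfl
  subst hG'
  refine ⟨fun z hz => ?_, ?_, by simp, by linarith⟩
  · simp only [add_re, ofReal_re]
    linarith [neg_two_lt_re_mul_stripMap hz]
  · exact (differentiableOn_id.mul differentiableOn_stripMap).add_const _
end
end

section
/- Let u, v be hermitian functionals with Carathéodory series F, G related by a general LST F·L = G·M + C with z^p L_* = L. Define M⁺ = (M + z^p M_*)/2, M⁻ = (M − z^p M_*)/(2i), C⁺ = (C + z^p C_*)/2, and let v̂ be the hermitian functional whose Laurent series is (G − G_*)/(2i). Then u·L = v·M⁺ − v̂·M⁻ + leb·C⁺ as functionals on Λ. -/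
open LaurentPolynomial Complex Polynomial

noncomputable section

/-!
Both sides are functionals on Laurent polynomials, so it suffices to compare them on the monomials
`zⁿ`, where `(w·N)[zⁿ]` is the coefficient of `z⁻ⁿ` in `L[w]·N`. For hermitian `u`, `v` one has
`L[u] = (F + F_*)/2` and `L[v] = (G + G_*)/2`, while `L[v̂] = (G - G_*)/(2i)`. Conjugating
`F·L = G·M + C` and multiplying by `z^p` gives, since `z^p L_* = L`,
`F_*·L = G_*·(z^p M_*) + z^p C_*`. Half the sum of the two relations is the claimed identity:
`½(G·M + G_*·z^p M_*) = L[v]·M⁺ - L[v̂]·M⁻`.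
-/

theorem LaurentPolynomial.linearMap_ext_T {R M : Type*} [CommSemiring R] [AddCommMonoid M]
    [Module R M] {φ ψ : R[T;T⁻¹] →ₗ[R] M} (h : ∀ n, φ (T n) = ψ (T n)) : φ = ψ := by
  refine LinearMap.ext fun f => ?_
  induction f using LaurentPolynomial.induction_on' with
  | add p q hp hq => rw [map_add, map_add, hp, hq]
  | C_mul_T n a => rw [← smul_eq_C_mul, map_smul, map_smul, h]

lemma coeF_T_mul (p : ℤ) (N : LP) (n : ℤ) : coeF (T p * N) n = coeF N (n - p) := by
  have := AddMonoidAlgebra.coeff_single_mul_apply (R := ℂ) N 1 p n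
  rwa [one_mul, neg_add_eq_sub] at this

lemma coeF_starLP (N : LP) (n : ℤ) : coeF (starLP N) n = starRingEnd ℂ (coeF N (-n)) := by
  simp [coeF, starLP, Finsupp.equivMapDomain_apply]

def mulSₗ (H : ℤ → ℂ) (n : ℤ) : LP →ₗ[ℂ] ℂ :=
  (Finsupp.lsum ℂ fun k => LinearMap.id.smulRight (H (n - k))) ∘ₗ
    (AddMonoidAlgebra.coeffLinearEquiv ℂ).toLinearMap

lemma mulSₗ_apply (H : ℤ → ℂ) (n : ℤ) (N : LP) : mulSₗ H n N = mulS H N n := rfl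

lemma mulS_T (H : ℤ → ℂ) (k n : ℤ) : mulS H (T k) n = H (n - k) := by
  show (Finsupp.single k (1 : ℂ)).sum _ = _
  rw [Finsupp.sum_single_index] <;> simp

lemma mulS_add_right (H : ℤ → ℂ) (N₁ N₂ : LP) (n : ℤ) :
    mulS H (N₁ + N₂) n = mulS H N₁ n + mulS H N₂ n :=
  map_add (mulSₗ H n) N₁ N₂

lemma mulS_sub_right (H : ℤ → ℂ) (N₁ N₂ : LP) (n : ℤ) :
    mulS H (N₁ - N₂) n = mulS H N₁ n - mulS H N₂ n :=
  map_sub (mulSₗ H n) N₁ N₂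

lemma mulS_smul_right (H : ℤ → ℂ) (a : ℂ) (N : LP) (n : ℤ) :
    mulS H (a • N) n = a * mulS H N n :=
  map_smul (mulSₗ H n) a N

lemma mulS_linear_comb_left (H₁ H₂ : ℤ → ℂ) (a b : ℂ) (N : LP) (n : ℤ) :
    mulS (fun m => a * H₁ m + b * H₂ m) N n = a * mulS H₁ N n + b * mulS H₂ N n := by
  simp only [mulS, Finsupp.sum, Finset.mul_sum, ← Finset.sum_add_distrib]
  exact Finset.sum_congr rfl fun _ _ => by ring

lemma mulS_T_mul (H : ℤ → ℂ) (p : ℤ) (N : LP) (n : ℤ) :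
    mulS H (T p * N) n = mulS H N (n - p) := by
  have : mulSₗ H n ∘ₗ LinearMap.mulLeft ℂ (T p) = mulSₗ H (n - p) :=
    linearMap_ext_T fun k => by
      simp only [LinearMap.comp_apply, LinearMap.mulLeft_apply, mulSₗ_apply, ← T_add, mulS_T]
      ring_nf
  exact LinearMap.congr_fun this N

lemma starS_mulS (H : ℤ → ℂ) (N : LP) (n : ℤ) :
    starS (mulS H N) n = mulS (starS H) (starLP N) n := by
  unfold starS mulS starLP coeF
  rw [AddMonoidAlgebra.coeff_ofCoeff, Finsupp.equivMapDomain_eq_mapDomain,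
    Finsupp.sum_mapDomain_index_inj (Equiv.injective _),
    Finsupp.sum_mapRange_index (by simp), map_finsuppSum]
  refine Finsupp.sum_congr fun k _ => ?_
  rw [map_mul, Equiv.neg_apply]
  congr 3
  ring

lemma smulF_apply_T (w : Func) (N : LP) (n : ℤ) : smulF w N (T n) = mulS (LS w) N (-n) := by
  have : w ∘ₗ LinearMap.mulRight ℂ (T n) = mulSₗ (LS w) (-n) :=
    linearMap_ext_T fun k => by
      simp only [LinearMap.comp_apply, LinearMap.mulRight_apply, mulSₗ_apply, ← T_add, mulS_T, LS,
        moment]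
      ring_nf
  exact LinearMap.congr_fun this N

lemma mulS_LS_lebF (N : LP) (n : ℤ) : mulS (LS lebF) N n = coeF N n := by
  have : mulSₗ (LS lebF) n = (Finsupp.lapply n) ∘ₗ
      (AddMonoidAlgebra.coeffLinearEquiv ℂ).toLinearMap :=
    linearMap_ext_T fun k => by
      simp [mulSₗ_apply, mulS_T, LS, moment, lebF, sub_eq_zero]
  exact LinearMap.congr_fun this N

lemma LS_eq_of_isHermitian {u : Func} (hu : IsHermitian u) (n : ℤ) :
    LS u n = 1 / 2 * CS u n + 1 / 2 * starS (CS u) n := by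
  have hu' := fun m => (hu m).symm
  rcases lt_trichotomy n 0 with h | rfl | h
  · simp [LS, CS, starS, h, h.ne, h.not_gt, hu', map_ofNat]
  · simp [LS, CS, starS, hu']
    ring
  · simp [LS, CS, starS, h, h.ne', h.not_gt]

lemma mulS_starS_of_LST {F G : ℤ → ℂ} {L M C : LP} {p : ℤ} (hLs : T p * starLP L = L)
    (hLST : ∀ n, mulS F L n = mulS G M n + coeF C n) (n : ℤ) :
    mulS (starS F) L n = mulS (starS G) (T p * starLP M) n + coeF (T p * starLP C) n := by
  rw [← hLs, mulS_T_mul, mulS_T_mul, coeF_T_mul, coeF_starLP, ← starS_mulS, ← starS_mulS]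
  simp only [starS, hLST, map_add]

lemma one_div_two_I : (1 : ℂ) / (2 * Complex.I) = -Complex.I / 2 := by
  rw [div_eq_div_iff (by simp) two_ne_zero]
  linear_combination 2 * Complex.I_mul_I

lemma mulS_LS_eq_of_LST {u v vhat : Func} (hu : IsHermitian u) (hv : IsHermitian v)
    (hvhatLS : ∀ n, LS vhat n = (CS v n - starS (CS v) n) / (2 * Complex.I))
    {L M C : LP} {p : ℤ} (hLs : T p * starLP L = L)
    (hLST : ∀ n, mulS (CS u) L n = mulS (CS v) M n + coeF C n) (n : ℤ) :
    mulS (LS u) L n = mulS (LS v) ((1 / 2 : ℂ) • (M + T p * starLP M)) n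
        - mulS (LS vhat) ((1 / (2 * Complex.I)) • (M - T p * starLP M)) n
        + coeF ((1 / 2 : ℂ) • (C + T p * starLP C)) n := by
  have hvhat (m : ℤ) : LS vhat m = -Complex.I / 2 * CS v m + Complex.I / 2 * starS (CS v) m := by
    rw [hvhatLS, div_eq_mul_one_div, one_div_two_I]
    ring
  rw [funext (LS_eq_of_isHermitian hu), funext (LS_eq_of_isHermitian hv), funext hvhat]
  simp only [mulS_linear_comb_left, mulS_smul_right, mulS_add_right, mulS_sub_right, hLST,
    mulS_starS_of_LST hLs hLST, coeF, AddMonoidAlgebra.coeff_smul_apply,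
    AddMonoidAlgebra.coeff_add, Finsupp.add_apply, smul_eq_mul]
  rw [one_div_two_I]
  linear_combination (1 / 4 : ℂ) * (mulS (CS v) M n - mulS (starS (CS v)) M n
      - mulS (CS v) (T p * starLP M) n + mulS (starS (CS v)) (T p * starLP M) n) * Complex.I_mul_I

theorem stmt19_general (u v vhat : Func) (hu : IsHermitian u) (hv : IsHermitian v)
    (hvhatLS : ∀ n : ℤ, LS vhat n = (CS v n - starS (CS v) n) / (2 * Complex.I))
    (L M C : LP) (p : ℤ)
    (hLs : T p * starLP L = L)
    (hLST : mulS (CS u) L = (fun n => mulS (CS v) M n + coeF C n)) :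
    smulF u L =
      smulF v ((1 / 2 : ℂ) • (M + T p * starLP M))
        - smulF vhat ((1 / (2 * Complex.I)) • (M - T p * starLP M))
        + smulF lebF ((1 / 2 : ℂ) • (C + T p * starLP C)) := by
  refine linearMap_ext_T fun n => ?_
  simp only [LinearMap.add_apply, LinearMap.sub_apply, smulF_apply_T, mulS_LS_lebF]
  exact mulS_LS_eq_of_LST hu hv hvhatLS hLs (congrFun hLST) (-n)

/-- for a general LST `F·L = G·M + C` with `z^p L_* = L`, setting
`M⁺ = (M + z^p M_*)/2`, `M⁻ = (M - z^p M_*)/(2i)`, `C⁺ = (C + z^p C_*)/2` and letting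
`v̂` be the hermitian functional with Laurent series `(G - G_*)/(2i)`, one has
`u·L = v·M⁺ - v̂·M⁻ + leb·C⁺`. -/
theorem stmt19 (u v vhat : Func) (hu : IsHermitian u) (hv : IsHermitian v)
    (hvhat : IsHermitian vhat)
    (hvhatLS : ∀ n : ℤ, LS vhat n = (CS v n - starS (CS v) n) / (2 * Complex.I))
    (L M C : LP) (p : ℤ) (hLne : L ≠ 0) (hMne : M ≠ 0)
    (hLs : T p * starLP L = L)
    (hLST : mulS (CS u) L = (fun n => mulS (CS v) M n + coeF C n)) :
    smulF u L =
      smulF v ((1 / 2 : ℂ) • (M + T p * starLP M))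
        - smulF vhat ((1 / (2 * Complex.I)) • (M - T p * starLP M))
        + smulF lebF ((1 / 2 : ℂ) • (C + T p * starLP C)) :=
  stmt19_general u v vhat hu hv hvhatLS L M C p hLs hLST
end
end
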